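/- arXiv:1503.02550 — 4 statements merged into one kernel-verified Lean document; each statement's English description precedes it below -/
import Mathlib

section
/- Let G be a finite simple graph, let P be a partition of V(G) into sets each of which is a module of G, and for each class M ∈ P choose a representative vertex v_M ∈ M; let V' be the set of chosen representatives. Let w: V(G) → ℕ⁺ be a weight function and define w*: V' → ℕ⁺ by w*(v_M) = χ_w(G(M)), the weighted chromatic number of the subgraph induced by M with the restricted weights. Then χ_w(G) = χ_{w*}(G(V')). -/
/-- `G` has a weighted coloring using colors from `{1,…,k}`: each vertex `v` gets a set
`c v ⊆ {1,…,k}` of `w v` colors, and adjacent vertices get disjoint color sets. -/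
def SimpleGraph.HasWeightedColoring {V : Type*} (G : SimpleGraph V) (w : V → ℕ) (k : ℕ) : Prop :=
  ∃ c : V → Finset ℕ, (∀ v, c v ⊆ Finset.Icc 1 k) ∧ (∀ v, (c v).card = w v) ∧
    ∀ u v, G.Adj u v → Disjoint (c u) (c v)

/-- The weighted chromatic number `χ_w(G)`: the least `k` admitting a weighted coloring. -/
noncomputable def SimpleGraph.weightedChromaticNumber {V : Type*} (G : SimpleGraph V)
    (w : V → ℕ) : ℕ :=
  sInf {k | G.HasWeightedColoring w k}

/-- A set `M` is a module of a graph `G`: every vertex outside `M` is adjacent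
to all vertices of `M` or to none of them. -/
def SimpleGraph.IsModuleSet {V : Type*} (G : SimpleGraph V) (M : Set V) : Prop :=
  ∀ x ∉ M, (∀ v ∈ M, G.Adj x v) ∨ (∀ v ∈ M, ¬ G.Adj x v)

/-!
Sending each vertex to the representative of its module is a retraction `q : V → V'` whose
fibres are the modules, and two vertices in different fibres are adjacent iff their images are.
A `w*`-colouring of `G(V')` lifts to `G`: colour each module `M` by an optimal colouring of
`G(M)`, its `χ_w(G(M))` colours renamed bijectively onto the colour set of the representative.
Conversely, in a `w`-colouring of `G` the colours used inside `M` colour `G(M)`, so there are at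
least `χ_w(G(M))` of them, and they avoid those used inside any module adjacent to `M`; any
`χ_w(G(M))` of them colour the representative.
-/

namespace SimpleGraph

variable {V W α β : Type*}

structure IsWeightedColoring (G : SimpleGraph V) (w : V → ℕ) (c : V → Finset α) : Prop where
  card_eq : ∀ v, (c v).card = w v
  disjoint : ∀ ⦃u v⦄, G.Adj u v → Disjoint (c u) (c v)

variable {G : SimpleGraph V} {w : V → ℕ}

theorem hasWeightedColoring_iff {k : ℕ} :
    G.HasWeightedColoring w k ↔
      ∃ c : V → Finset ℕ, (∀ v, c v ⊆ Finset.Icc 1 k) ∧ G.IsWeightedColoring w c :=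
  ⟨fun ⟨c, hsub, hcard, hdisj⟩ => ⟨c, hsub, hcard, fun u v => hdisj u v⟩,
    fun ⟨c, hsub, hc⟩ => ⟨c, hsub, hc.card_eq, fun _ _ => (hc.disjoint ·)⟩⟩

theorem IsWeightedColoring.induce {c : V → Finset α} (hc : G.IsWeightedColoring w c)
    (s : Set V) : (G.induce s).IsWeightedColoring (fun x => w x) (fun x => c x) :=
  ⟨fun x => hc.card_eq x, fun _ _ h => hc.disjoint h⟩

theorem IsWeightedColoring.exists_subset {c : V → Finset α} (hc : G.IsWeightedColoring w c)
    {S : Finset α} (hS : ∀ v, c v ⊆ S) {T : Finset β} (hST : S.card ≤ T.card) :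
    ∃ c' : V → Finset β, G.IsWeightedColoring w c' ∧ ∀ v, c' v ⊆ T := by
  classical
  obtain ⟨e⟩ : Nonempty (S ↪ T) :=
    Function.Embedding.nonempty_of_card_le (by simpa only [Fintype.card_coe] using hST)
  have hfilter : ∀ v, (c v).filter (· ∈ S) = c v := fun v => Finset.filter_true_of_mem (hS v)
  refine ⟨fun v => ((c v).subtype (· ∈ S)).map (e.trans (Function.Embedding.subtype _)),
    ⟨fun v => ?_, fun u v huv => ?_⟩, fun v => ?_⟩
  · rw [Finset.card_map, Finset.card_subtype, hfilter, hc.card_eq]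
  · rw [Finset.disjoint_map, ← Finset.disjoint_map (Function.Embedding.subtype _),
      Finset.subtype_map, Finset.subtype_map, hfilter, hfilter]
    exact hc.disjoint huv
  · intro b hb
    obtain ⟨a, -, rfl⟩ := Finset.mem_map.1 hb
    exact (e a).2

theorem hasWeightedColoring_card {c : V → Finset α} (hc : G.IsWeightedColoring w c)
    {S : Finset α} (hS : ∀ v, c v ⊆ S) : G.HasWeightedColoring w S.card := by
  obtain ⟨c', hc', hsub⟩ :=
    hc.exists_subset hS (T := Finset.Icc 1 S.card) (by rw [Nat.card_Icc, Nat.add_sub_cancel])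
  exact hasWeightedColoring_iff.2 ⟨c', hsub, hc'⟩

theorem weightedChromaticNumber_le {k : ℕ} (h : G.HasWeightedColoring w k) :
    G.weightedChromaticNumber w ≤ k :=
  Nat.sInf_le h

theorem weightedChromaticNumber_le_card {c : V → Finset α} (hc : G.IsWeightedColoring w c)
    {S : Finset α} (hS : ∀ v, c v ⊆ S) : G.weightedChromaticNumber w ≤ S.card :=
  weightedChromaticNumber_le (hasWeightedColoring_card hc hS)

theorem exists_hasWeightedColoring [Finite V] (G : SimpleGraph V) (w : V → ℕ) :
    ∃ k, G.HasWeightedColoring w k := by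
  classical
  have := Fintype.ofFinite V
  let c : V → Finset (V × ℕ) := fun v => {v} ×ˢ Finset.range (w v)
  have hc : G.IsWeightedColoring w c := by
    refine ⟨fun v => by simp [c], fun u v huv => ?_⟩
    exact Finset.disjoint_product.2 (Or.inl (Finset.disjoint_singleton.2 (G.ne_of_adj huv)))
  exact ⟨_, hasWeightedColoring_card hc fun v =>
    Finset.subset_biUnion_of_mem c (Finset.mem_univ v)⟩

theorem hasWeightedColoring_weightedChromaticNumber [Finite V] (G : SimpleGraph V)
    (w : V → ℕ) : G.HasWeightedColoring w (G.weightedChromaticNumber w) :=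
  Nat.sInf_mem (exists_hasWeightedColoring G w)

theorem IsModuleSet.adj_of_adj {M : Set V} (hM : G.IsModuleSet M) {x y y' : V} (hx : x ∉ M)
    (hy : y ∈ M) (hy' : y' ∈ M) (h : G.Adj x y) : G.Adj x y' :=
  (hM x hx).elim (· y' hy') fun hnone => absurd h (hnone y hy)

theorem IsModuleSet.adj_iff_adj {M N : Set V} (hM : G.IsModuleSet M) (hN : G.IsModuleSet N)
    (hMN : Disjoint M N) {x x' y y' : V} (hx : x ∈ M) (hx' : x' ∈ M) (hy : y ∈ N)
    (hy' : y' ∈ N) : G.Adj x y ↔ G.Adj x' y' := by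
  have key : ∀ {x x' y y'}, x ∈ M → x' ∈ M → y ∈ N → y' ∈ N → G.Adj x y → G.Adj x' y' :=
    fun hx hx' hy hy' h =>
      (hM.adj_of_adj (hMN.notMem_of_mem_right hy') hx hx'
        (hN.adj_of_adj (hMN.notMem_of_mem_left hx) hy hy' h).symm).symm
  exact ⟨key hx hx' hy hy', key hx' hx hy' hy⟩

noncomputable def fiberWeightedChromaticNumber (G : SimpleGraph V) (q : V → W) (w : V → ℕ)
    (a : W) : ℕ :=
  (G.induce (q ⁻¹' {a})).weightedChromaticNumber fun u => w u

variable {H : SimpleGraph W} {q : V → W}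

theorem weightedChromaticNumber_fiber_le [Fintype V]
    (hq : ∀ u v, H.Adj (q u) (q v) → G.Adj u v) :
    H.weightedChromaticNumber (G.fiberWeightedChromaticNumber q w) ≤
      G.weightedChromaticNumber w := by
  classical
  obtain ⟨c, hcsub, hc⟩ :=
    hasWeightedColoring_iff.1 (hasWeightedColoring_weightedChromaticNumber G w)
  let T : W → Finset ℕ := fun a => (Finset.univ.filter (q · = a)).biUnion c
  have hT : ∀ a, G.fiberWeightedChromaticNumber q w a ≤ (T a).card := fun a =>
    weightedChromaticNumber_le_card (hc.induce _) fun x =>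
      Finset.subset_biUnion_of_mem c (Finset.mem_filter.2 ⟨Finset.mem_univ _, x.2⟩)
  choose t htT ht using fun a => Finset.exists_subset_card_eq (hT a)
  refine weightedChromaticNumber_le (hasWeightedColoring_iff.2 ⟨t,
    fun a => (htT a).trans (Finset.biUnion_subset.2 fun u _ => hcsub u), ht, fun a b hab => ?_⟩)
  refine Disjoint.mono (htT a) (htT b) ?_
  simp only [T, Finset.disjoint_biUnion_left, Finset.disjoint_biUnion_right, Finset.mem_filter,
    Finset.mem_univ, true_and]
  rintro u rfl v rfl
  exact hc.disjoint (hq _ _ hab)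

theorem isWeightedColoring_of_fibers {c : W → Finset α}
    (hq : ∀ u v, G.Adj u v → q u ≠ q v → H.Adj (q u) (q v))
    (hc : ∀ ⦃a b⦄, H.Adj a b → Disjoint (c a) (c b)) {e : ∀ a, q ⁻¹' {a} → Finset α}
    (he : ∀ a, (G.induce (q ⁻¹' {a})).IsWeightedColoring (fun x => w x) (e a))
    (hec : ∀ a x, e a x ⊆ c a) :
    G.IsWeightedColoring w fun u => e (q u) ⟨u, rfl⟩ := by
  refine ⟨fun u => (he (q u)).card_eq _, fun u v huv => ?_⟩
  by_cases hquv : q u = q v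
  · have key : ∀ a b (hu : q u = a) (hv : q v = b), a = b →
        Disjoint (e a ⟨u, hu⟩) (e b ⟨v, hv⟩) := by
      rintro a _ hu hv rfl
      exact (he a).disjoint huv
    exact key _ _ rfl rfl hquv
  · exact (hc (hq u v huv hquv)).mono (hec _ _) (hec _ _)

theorem HasWeightedColoring.of_fibers [Finite V] {k : ℕ}
    (hq : ∀ u v, G.Adj u v → q u ≠ q v → H.Adj (q u) (q v))
    (h : H.HasWeightedColoring (G.fiberWeightedChromaticNumber q w) k) :
    G.HasWeightedColoring w k := by
  obtain ⟨c, hcsub, hc⟩ := hasWeightedColoring_iff.1 h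
  have hfiber : ∀ a, ∃ e : q ⁻¹' {a} → Finset ℕ,
      (G.induce (q ⁻¹' {a})).IsWeightedColoring (fun x => w x) e ∧ ∀ x, e x ⊆ c a := by
    intro a
    obtain ⟨d, hdsub, hd⟩ := hasWeightedColoring_iff.1
      (hasWeightedColoring_weightedChromaticNumber (G.induce (q ⁻¹' {a})) _)
    exact hd.exists_subset hdsub (by rw [Nat.card_Icc, Nat.add_sub_cancel, hc.card_eq]; rfl)
  choose e he hec using hfiber
  exact hasWeightedColoring_iff.2 ⟨_, fun u => (hec _ _).trans (hcsub _),
    isWeightedColoring_of_fibers hq hc.disjoint he hec⟩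

theorem weightedChromaticNumber_eq_fiber [Fintype V] [Finite W]
    (hq : ∀ u v, q u ≠ q v → (G.Adj u v ↔ H.Adj (q u) (q v))) :
    G.weightedChromaticNumber w =
      H.weightedChromaticNumber (G.fiberWeightedChromaticNumber q w) :=
  le_antisymm
    (weightedChromaticNumber_le ((hasWeightedColoring_weightedChromaticNumber H _).of_fibers
      fun u v huv hne => (hq u v hne).1 huv))
    (weightedChromaticNumber_fiber_le fun u v h => (hq u v (H.ne_of_adj h)).2 h)

end SimpleGraph

theorem Setoid.IsPartition.exists_retraction_fibers_mem {V : Type*} {P : Set (Set V)}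
    (hP : Setoid.IsPartition P) {V' : Set V} (hrep : ∀ M ∈ P, ∃! v, v ∈ M ∩ V') :
    ∃ q : V → V', (∀ a, q ⁻¹' {a} ∈ P) ∧ ∀ a : V', q a = a := by
  choose M hM hmemM using fun u => (hP.2 u).exists
  have hM_unique : ∀ u N, N ∈ P → u ∈ N → N = M u := fun u N hN hu =>
    (hP.2 u).unique ⟨hN, hu⟩ ⟨hM u, hmemM u⟩
  choose r hr using fun u => (hrep (M u) (hM u)).exists
  have hr_unique : ∀ u v, v ∈ M u ∩ V' → v = r u := fun u v hv =>
    (hrep (M u) (hM u)).unique hv (hr u)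
  refine ⟨fun u => ⟨r u, (hr u).2⟩, fun a => ?_,
    fun a => Subtype.ext (hr_unique a a ⟨hmemM a, a.2⟩).symm⟩
  have hfiber : (fun u => (⟨r u, (hr u).2⟩ : V')) ⁻¹' {a} = M a := by
    ext u
    simp only [Set.mem_preimage, Set.mem_singleton_iff, Subtype.ext_iff]
    constructor
    · intro hu
      rw [← hM_unique a (M u) (hM u) (hu ▸ (hr u).1)]
      exact hmemM u
    · intro hu
      exact (hr_unique u a ⟨hM_unique u (M a) (hM a) hu ▸ hmemM a, a.2⟩).symm
  exact hfiber ▸ hM a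

theorem weightedChromaticNumber_modular_contraction_general
    {V : Type*} [Fintype V] (G : SimpleGraph V) (w : V → ℕ)
    (P : Set (Set V)) (hP : Setoid.IsPartition P)
    (hmod : ∀ M ∈ P, G.IsModuleSet M)
    (V' : Set V) (hrep : ∀ M ∈ P, ∃! v : V, v ∈ M ∩ V')
    (wstar : V → ℕ)
    (hwstar : ∀ M ∈ P, ∀ v ∈ M ∩ V',
      wstar v = (G.induce M).weightedChromaticNumber (fun u => w u)) :
    G.weightedChromaticNumber w =
      (G.induce V').weightedChromaticNumber (fun v => wstar v) := by
  obtain ⟨q, hfiber, hq⟩ := hP.exists_retraction_fibers_mem hrep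
  have hqa : ∀ a, (a : V) ∈ q ⁻¹' {a} := hq
  have hwq : (fun v : V' => wstar v) = G.fiberWeightedChromaticNumber q w :=
    funext fun a => hwstar _ (hfiber a) a ⟨hqa a, a.2⟩
  rw [hwq]
  refine G.weightedChromaticNumber_eq_fiber fun u v huv => ?_
  exact (hmod _ (hfiber (q u))).adj_iff_adj (hmod _ (hfiber (q v)))
    ((Set.disjoint_singleton.2 huv).preimage q) rfl (hqa _) rfl (hqa _)

/-- Let `P` be a partition of the vertex set of `G` into modules and let
`V'` contain exactly one representative of each class of `P`. If `w*` assigns to each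
representative of a class `M` the weighted chromatic number of `G(M)` (with weights
restricted from `w`), then `χ_w(G) = χ_{w*}(G(V'))`. -/
theorem weightedChromaticNumber_modular_contraction
    {V : Type*} [Fintype V] (G : SimpleGraph V) (w : V → ℕ) (hw : ∀ v, 0 < w v)
    (P : Set (Set V)) (hP : Setoid.IsPartition P)
    (hmod : ∀ M ∈ P, G.IsModuleSet M)
    (V' : Set V) (hrep : ∀ M ∈ P, ∃! v : V, v ∈ M ∩ V')
    (hV' : V' ⊆ ⋃ M ∈ P, M)
    (wstar : V → ℕ)
    (hwstar : ∀ M ∈ P, ∀ v ∈ M ∩ V',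
      wstar v = (G.induce M).weightedChromaticNumber (fun u => w u)) :
    G.weightedChromaticNumber w =
      (G.induce V').weightedChromaticNumber (fun v => wstar v) :=
  weightedChromaticNumber_modular_contraction_general G w P hP hmod V' hrep wstar hwstar
end

section
/- Let p ≥ 3 and let G be a finite connected simple graph that contains no induced subgraph isomorphic to P5 (the path on 5 vertices) and no induced subgraph isomorphic to K_p − e (the complete graph on p vertices minus one edge), and suppose G has no clique separator. Let Q be a maximum clique of G. Then either G contains no independent set of three vertices, or |Q| ≤ (p+1)^{p+2}·(p−2). -/
/-!
Suppose `G` has an independent set of size three. At most one of its vertices lies in the clique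
`Q`, so two of them, `a` and `b`, are nonadjacent and outside `Q`. By maximality of `Q` and
`Kₚ − e`-freeness, every vertex outside `Q` has at most `m = p - 3` neighbours in `Q`.
As `Q \ {u}` is no separator, each `u ∈ Q` is joined to `a` by a path outside `Q`; by
`P₅`-freeness a shortest one has length 2 or 3, and length 3 would confine `Q` to the
neighbourhoods of the three path vertices. So every `u ∈ Q` not adjacent to `a` has a common
neighbour with `a` outside `Q`, and likewise for `b`.

Greedily choose many `f i ∈ Q` seen by neither `a` nor `b`, with connectors `g i` (to `a`) and
`h i` (to `b`) that miss every later `f j`. `P₅`-freeness makes the connectors to `a` a clique,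
and those to `b` as well. Either `m + 1` distinct connectors to `a` see `b`, giving a `Kₚ − e` on
them together with `a` and `b`, or a late `g i₀` misses `b`; then the connectors to `b` of the
many earlier `f j` not seen by `g i₀` all see `g i₀`, giving a `Kₚ − e` with `g i₀` and `b`.
This bounds `|Q|` by a cubic in `p`, well below `(p + 1) ^ (p + 2) * (p - 2)`.
-/

/-- The complete graph on `p` vertices minus one edge (the edge between `0` and `1`). -/
def completeMinusEdge (p : ℕ) : SimpleGraph (Fin p) :=
  SimpleGraph.fromRel
    (fun a b => ¬(a.val = 0 ∧ b.val = 1) ∧ ¬(a.val = 1 ∧ b.val = 0))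

/-- `G` is `H`-free: no induced subgraph of `G` is isomorphic to `H`
(equivalently, there is no graph embedding of `H` into `G`). -/
def IsFree {V W : Type*} (G : SimpleGraph V) (H : SimpleGraph W) : Prop :=
  ¬ Nonempty (H ↪g G)

/-- `G` has a clique separator: a clique `Q` such that the remaining vertices split into
two nonempty sets with no edges between them. -/
def HasCliqueSeparator {V : Type*} (G : SimpleGraph V) : Prop :=
  ∃ Q A B : Set V, G.IsClique Q ∧ A.Nonempty ∧ B.Nonempty ∧ Disjoint A B ∧
    A ∪ B = Qᶜ ∧ ∀ a ∈ A, ∀ b ∈ B, ¬ G.Adj a b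

open Finset SimpleGraph

section

variable {V : Type*} {G : SimpleGraph V}

namespace IsFree

theorem false_of_inducedPath (hP5 : IsFree G (pathGraph 5)) {v₀ v₁ v₂ v₃ v₄ : V}
    (h₀₁ : G.Adj v₀ v₁) (h₁₂ : G.Adj v₁ v₂) (h₂₃ : G.Adj v₂ v₃) (h₃₄ : G.Adj v₃ v₄)
    (h₀₂ : ¬G.Adj v₀ v₂) (h₀₃ : ¬G.Adj v₀ v₃) (h₀₄ : ¬G.Adj v₀ v₄)
    (h₁₃ : ¬G.Adj v₁ v₃) (h₁₄ : ¬G.Adj v₁ v₄) (h₂₄ : ¬G.Adj v₂ v₄) : False := by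
  -- distinctness of the `vᵢ` is forced by the adjacency pattern
  have hinj : Function.Injective ![v₀, v₁, v₂, v₃, v₄] := by
    intro i j hij
    fin_cases i <;> fin_cases j <;> simp at hij ⊢ <;> subst hij <;> simp_all [G.adj_comm]
  refine hP5 ⟨⟨⟨_, hinj⟩, fun {i j} => ?_⟩⟩
  fin_cases i <;> fin_cases j <;> simp [pathGraph_adj, G.adj_comm, *]

theorem adj_of_isClique {p : ℕ} (hKpe : IsFree G (completeMinusEdge p)) (hp : 2 ≤ p)
    {K : Finset V} (hK : G.IsClique (K : Set V)) (hcard : p - 2 ≤ #K) {x y : V}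
    (hx : ∀ z ∈ K, G.Adj x z) (hy : ∀ z ∈ K, G.Adj y z) (hxy : x ≠ y) : G.Adj x y := by
  obtain ⟨n, rfl⟩ : ∃ n, p = n + 2 := ⟨p - 2, by omega⟩
  by_contra hna
  obtain ⟨e, he⟩ : ∃ e : Fin n ↪ V, ∀ i, e i ∈ K :=
    ⟨(Fin.castLEEmb (by simpa using hcard)).trans
      (K.equivFin.symm.toEmbedding.trans (Function.Embedding.subtype _)),
      fun i => (K.equivFin.symm _).2⟩
  have hyK : y ∉ Set.range e := by
    rintro ⟨i, hi⟩; exact G.loopless.irrefl y (hi ▸ hy _ (he i))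
  have hxK : x ∉ Set.range (Fin.Embedding.cons e hyK) := by
    rintro ⟨i, hi⟩
    induction i using Fin.cases with
    | zero => exact hxy hi.symm
    | succ i => exact G.loopless.irrefl x (hi ▸ hx _ (he i))
  have hxe : ∀ i, G.Adj x (e i) := fun i => hx _ (he i)
  have hye : ∀ i, G.Adj y (e i) := fun i => hy _ (he i)
  have hee : ∀ i j, G.Adj (e i) (e j) ↔ i ≠ j :=
    fun i j => ⟨fun h hij => G.loopless.irrefl _ (hij ▸ h),
      fun h => hK (he i) (he j) (e.injective.ne h)⟩
  -- `Kₚ − e` embeds as `x, y, e 0, …, e (n - 1)`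
  refine hKpe ⟨⟨Fin.Embedding.cons _ hxK, fun {i j} => ?_⟩⟩
  have h0 : ∀ j : Fin n, (0 : Fin (n + 2)) ≠ j.succ.succ := fun j => (Fin.succ_ne_zero _).symm
  have h1 : ∀ j : Fin n, (1 : Fin (n + 2)) ≠ j.succ.succ :=
    fun j h => Nat.succ_succ_ne_one j (by simpa using congrArg Fin.val h.symm)
  cases i using Fin.cases with
  | zero =>
    cases j using Fin.cases with
    | zero => simp [completeMinusEdge]
    | succ j =>
      cases j using Fin.cases with
      | zero => simp [completeMinusEdge, hna]
      | succ j => simp [completeMinusEdge, hxe, h0]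
  | succ i =>
    cases i using Fin.cases with
    | zero =>
      cases j using Fin.cases with
      | zero => simp [completeMinusEdge, G.adj_comm y, hna]
      | succ j =>
        cases j using Fin.cases with
        | zero => simp [completeMinusEdge]
        | succ j => simp [completeMinusEdge, hye, h1]
    | succ i =>
      cases j using Fin.cases with
      | zero => simp [completeMinusEdge, G.adj_comm (e _), hxe, (h0 _).symm]
      | succ j =>
        cases j using Fin.cases with
        | zero => simp [completeMinusEdge, G.adj_comm (e _) y, hye, (h1 _).symm]
        | succ j => simp [completeMinusEdge, hee]

theorem induce {W : Type*} {H : SimpleGraph W} (h : IsFree G H) (s : Set V) :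
    IsFree (G.induce s) H :=
  fun ⟨f⟩ => h ⟨f.trans (Embedding.induce s)⟩

end IsFree

theorem SimpleGraph.Walk.not_adj_getVert_of_length_eq_dist {u v : V} (p : G.Walk u v)
    (hp : p.length = G.dist u v) {i j : ℕ} (hij : i + 2 ≤ j) (hj : j ≤ p.length) :
    ¬G.Adj (p.getVert i) (p.getVert j) := fun hadj => by
  have := G.dist_le ((p.take i).append (cons hadj (p.drop j)))
  simp only [length_append, length_cons, take_length, drop_length] at this
  omega

theorem IsFree.dist_le_three (hP5 : IsFree G (pathGraph 5)) {x y : V} (h : G.Reachable x y) :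
    G.dist x y ≤ 3 := by
  obtain ⟨w, hw⟩ := h.exists_walk_length_eq_dist
  by_contra! h3
  have gap := fun i j (hij : i + 2 ≤ j) (hj : j ≤ 4) =>
    w.not_adj_getVert_of_length_eq_dist hw hij (by omega)
  exact hP5.false_of_inducedPath (w.adj_getVert_succ (i := 0) (by omega))
    (w.adj_getVert_succ (i := 1) (by omega)) (w.adj_getVert_succ (i := 2) (by omega))
    (w.adj_getVert_succ (i := 3) (by omega)) (gap 0 2 le_rfl (by omega))
    (gap 0 3 (by omega) (by omega)) (gap 0 4 (by omega) le_rfl) (gap 1 3 le_rfl (by omega))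
    (gap 1 4 (by omega) le_rfl) (gap 2 4 le_rfl le_rfl)

theorem preconnected_induce_compl_of_not_hasCliqueSeparator (hsep : ¬HasCliqueSeparator G)
    {K : Set V} (hK : G.IsClique K) : (G.induce Kᶜ).Preconnected := by
  intro x y
  by_contra hxy
  set P : Set ↥Kᶜ := {z | (G.induce Kᶜ).Reachable x z}
  refine hsep ⟨K, Subtype.val '' P, Subtype.val '' Pᶜ, hK, ⟨x, x, Reachable.refl _, rfl⟩,
    ⟨y, y, hxy, rfl⟩, ?_, ?_, ?_⟩
  · exact (Set.disjoint_image_iff Subtype.val_injective).mpr disjoint_compl_right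
  · rw [← Set.image_union, Set.union_compl_self, Set.image_univ, Subtype.range_coe]
  · rintro _ ⟨a, ha, rfl⟩ _ ⟨b, hb, rfl⟩ hab
    exact hb (ha.trans (induce_adj.mpr hab).reachable)

theorem SimpleGraph.IsIndepSet.card_inter_le_one [DecidableEq V] {S Q : Finset V}
    (hS : G.IsIndepSet (S : Set V)) (hQ : G.IsClique (Q : Set V)) : #(S ∩ Q) ≤ 1 :=
  card_le_one.mpr fun _ hx _ hy => by_contra fun hxy =>
    hS (mem_inter.mp hx).1 (mem_inter.mp hy).1 hxy (hQ (mem_inter.mp hx).2 (mem_inter.mp hy).2 hxy)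

theorem IsFree.card_filter_adj_le [DecidableRel G.Adj] {p : ℕ}
    (hKpe : IsFree G (completeMinusEdge p)) (hp : 2 ≤ p) {Q : Finset V}
    (hQ : G.IsClique (Q : Set V)) (hQmax : ∀ C : Finset V, G.IsClique (C : Set V) → #C ≤ #Q)
    {v : V} (hv : v ∉ Q) : #{x ∈ Q | G.Adj v x} ≤ p - 3 := by
  by_contra! h
  obtain ⟨y, hyQ, hvy⟩ : ∃ y ∈ Q, ¬G.Adj v y := by
    classical
    by_contra! hall
    have := hQmax (insert v Q) (by rw [coe_insert]; exact hQ.insert fun y hy _ => hall y hy)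
    rw [card_insert_of_notMem hv] at this
    omega
  refine hvy (hKpe.adj_of_isClique hp (K := {x ∈ Q | G.Adj v x})
    (hQ.subset (filter_subset _ _)) (by omega) (fun z hz => (mem_filter.mp hz).2)
    (fun z hz => hQ hyQ (mem_filter.mp hz).1 ?_) (fun h => hv (h ▸ hyQ)))
  rintro rfl
  exact hvy (mem_filter.mp hz).2

section Clique

variable [DecidableRel G.Adj] {Q : Finset V} {m : ℕ}

theorem IsFree.card_le_of_inducedPath (hP5 : IsFree G (pathGraph 5))
    (hQ : G.IsClique (Q : Set V)) (hdeg : ∀ v ∉ Q, #{x ∈ Q | G.Adj v x} ≤ m) {u s t c : V}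
    (hu : u ∈ Q) (hs : s ∉ Q) (ht : t ∉ Q) (hc : c ∉ Q) (hus : G.Adj u s) (hst : G.Adj s t) (htc : G.Adj t c)
    (hut : ¬G.Adj u t) (huc : ¬G.Adj u c) (hsc : ¬G.Adj s c) : #Q ≤ 3 * m + 1 := by
  classical
  have hsub :
      Q ⊆ insert u ({x ∈ Q | G.Adj s x} ∪ {x ∈ Q | G.Adj t x} ∪ {x ∈ Q | G.Adj c x}) := by
    intro x hx
    by_contra hx'
    simp only [mem_insert, mem_union, mem_filter, hx, true_and, not_or] at hx'
    obtain ⟨hxu, ⟨hxs, hxt⟩, hxc⟩ := hx'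
    exact hP5.false_of_inducedPath (hQ hx hu hxu) hus hst htc (fun h => hxs h.symm)
      (fun h => hxt h.symm) (fun h => hxc h.symm) hut huc hsc
  calc #Q ≤ _ := card_le_card hsub
    _ ≤ _ := card_insert_le _ _
    _ ≤ #{x ∈ Q | G.Adj s x} + #{x ∈ Q | G.Adj t x} + #{x ∈ Q | G.Adj c x} + 1 := by
      grw [card_union_le, card_union_le]
    _ ≤ 3 * m + 1 := by grw [hdeg s hs, hdeg t ht, hdeg c hc]; omega

theorem IsFree.exists_common_adj (hP5 : IsFree G (pathGraph 5))
    (hsep : ¬HasCliqueSeparator G) (hQ : G.IsClique (Q : Set V))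
    (hdeg : ∀ v ∉ Q, #{x ∈ Q | G.Adj v x} ≤ m) (hQm : 3 * m + 1 < #Q) {u c : V} (hu : u ∈ Q)
    (hc : c ∉ Q) (huc : ¬G.Adj u c) : ∃ s ∉ Q, G.Adj s u ∧ G.Adj s c := by
  -- `u` and `c` are joined outside the clique `Q \ {u}`, by a path of length 2 or 3
  have hmem : ∀ {x : V}, x ∈ (↑Q \ {u} : Set V)ᶜ ↔ x = u ∨ x ∉ Q := by
    intro x; by_cases x = u <;> simp_all
  have hreach := preconnected_induce_compl_of_not_hasCliqueSeparator hsep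
    (hQ.subset Set.sdiff_subset) ⟨u, hmem.mpr (.inl rfl)⟩ ⟨c, hmem.mpr (.inr hc)⟩
  have hd2 := hreach.one_lt_dist_of_ne_of_not_adj (fun h => hc (Subtype.mk.inj h ▸ hu)) huc
  have hd3 := (hP5.induce _).dist_le_three hreach
  obtain ⟨w, hw⟩ := hreach.exists_walk_length_eq_dist
  have hend : ∀ {n}, w.length = n → (w.getVert n : V) = c := by
    rintro _ rfl
    rw [w.getVert_length]
  have h01 : G.Adj u (w.getVert 1) := by simpa using w.adj_getVert_succ (i := 0) (by omega)
  have h1 : (w.getVert 1 : V) ∉ Q :=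
    (hmem.mp (Subtype.prop _)).resolve_left fun h => h01.ne h.symm
  have h12 : G.Adj (w.getVert 1) (w.getVert 2) := w.adj_getVert_succ (i := 1) (by omega)
  obtain hd | hd : w.length = 2 ∨ w.length = 3 := by omega
  · rw [hend hd] at h12
    exact ⟨_, h1, h01.symm, h12⟩
  · have h23 : G.Adj (w.getVert 2) (w.getVert 3) := w.adj_getVert_succ (i := 2) (by omega)
    have h13 : ¬G.Adj (w.getVert 1) (w.getVert 3) :=
      w.not_adj_getVert_of_length_eq_dist hw (i := 1) (j := 3) le_rfl (by omega)
    rw [hend hd] at h23 h13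
    have h2 : (w.getVert 2 : V) ∉ Q :=
      (hmem.mp (Subtype.prop _)).resolve_left fun h => huc (h ▸ h23)
    have h02 : ¬G.Adj u (w.getVert 2) := by
      simpa using w.not_adj_getVert_of_length_eq_dist hw (i := 0) (j := 2) le_rfl (by omega)
    have := hP5.card_le_of_inducedPath hQ hdeg hu h1 h2 hc h01 h12 h23 h02 huc h13
    omega

end Clique

theorem Finset.exists_seq_forall_notMem {α : Type*} [DecidableEq α] [Nonempty α]
    (B : α → Finset α) {d : ℕ} :
    ∀ (n : ℕ) (R : Finset α), (∀ u ∈ R, #(B u) ≤ d) → n * (d + 1) ≤ #R →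
      ∃ f : ℕ → α, (∀ i < n, f i ∈ R) ∧ ∀ i j, i < j → j < n → f i ≠ f j ∧ f j ∉ B (f i) := by
  intro n
  induction n with
  | zero => exact fun _ _ _ => ⟨fun _ => Classical.arbitrary α, by simp, by simp⟩
  | succ n ih =>
    intro R hB hR
    obtain ⟨u, hu⟩ : R.Nonempty := card_pos.mp (by nlinarith)
    have hR' : n * (d + 1) ≤ #(R \ insert u (B u)) := by
      grw [← le_card_sdiff, card_insert_le, hB u hu]
      rw [add_one_mul] at hR
      omega
    obtain ⟨f, hfR, hf⟩ := ih _ (fun v hv => hB v (mem_sdiff.mp hv).1) hR'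
    refine ⟨fun | 0 => u | i + 1 => f i, ?_, ?_⟩
    · rintro (_ | i) hi
      exacts [hu, (mem_sdiff.mp (hfR i (by omega))).1]
    · rintro (_ | i) (_ | j) hij hj
      · omega
      · have := (mem_sdiff.mp (hfR j (by omega))).2
        rw [mem_insert, not_or] at this
        exact ⟨Ne.symm this.1, this.2⟩
      · omega
      · exact hf i j (by omega) (by omega)

structure IsConnectorSeq (G : SimpleGraph V) (Q : Finset V) (c : V) (f g : ℕ → V) (n : ℕ) :
    Prop where
  mem : ∀ i < n, f i ∈ Q
  not_adj_center : ∀ i < n, ¬G.Adj c (f i)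
  not_mem : ∀ i < n, g i ∉ Q
  adj : ∀ i < n, G.Adj (g i) (f i)
  adj_center : ∀ i < n, G.Adj (g i) c
  ne : ∀ i j, i < j → j < n → f i ≠ f j
  not_adj : ∀ i j, i < j → j < n → ¬G.Adj (g i) (f j)

namespace IsConnectorSeq

variable {Q : Finset V} {c : V} {f g : ℕ → V} {n m : ℕ}

theorem injOn (h : IsConnectorSeq G Q c f g n) : Set.InjOn f (range n) := by
  intro i hi j hj hij
  by_contra hne
  simp only [coe_range, Set.mem_Iio] at hi hj
  obtain hlt | hlt := Nat.lt_or_gt_of_ne hne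
  exacts [h.ne i j hlt hj hij, h.ne j i hlt hi hij.symm]

theorem of_comp {σ : V → V} (hf : ∀ i < n, f i ∈ Q ∧ ¬G.Adj c (f i))
    (hσ : ∀ u ∈ Q, ¬G.Adj c u → σ u ∉ Q ∧ G.Adj (σ u) u ∧ G.Adj (σ u) c)
    (hgen : ∀ i j, i < j → j < n → f i ≠ f j ∧ ¬G.Adj (σ (f i)) (f j)) :
    IsConnectorSeq G Q c f (σ ∘ f) n where
  mem i hi := (hf i hi).1
  not_adj_center i hi := (hf i hi).2
  not_mem i hi := (hσ _ (hf i hi).1 (hf i hi).2).1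
  adj i hi := (hσ _ (hf i hi).1 (hf i hi).2).2.1
  adj_center i hi := (hσ _ (hf i hi).1 (hf i hi).2).2.2
  ne i j hij hj := (hgen i j hij hj).1
  not_adj i j hij hj := (hgen i j hij hj).2

theorem isClique_image (hP5 : IsFree G (pathGraph 5)) (hQ : G.IsClique (Q : Set V))
    (h : IsConnectorSeq G Q c f g (n + 1)) : G.IsClique (g '' Set.Iio n) := by
  have key : ∀ i j, i < j → j < n → g i ≠ g j → G.Adj (g i) (g j) := by
    intro i j hij hj hne
    by_contra hna
    -- the induced path `g i, c, g j, f j, f n`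
    exact hP5.false_of_inducedPath (h.adj_center i (by omega)) (h.adj_center j (by omega)).symm
      (h.adj j (by omega)) (hQ (h.mem j (by omega)) (h.mem n (by omega)) (h.ne j n hj (by omega)))
      hna (h.not_adj i j hij (by omega)) (h.not_adj i n (by omega) (by omega))
      (h.not_adj_center j (by omega)) (h.not_adj_center n (by omega)) (h.not_adj j n hj (by omega))
  rintro _ ⟨i, hi, rfl⟩ _ ⟨j, hj, rfl⟩ hne
  obtain hlt | hlt := Nat.lt_or_gt_of_ne (fun hij => hne (congrArg g hij))
  exacts [key i j hlt hj hne, (key j i hlt hi hne.symm).symm]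

variable [DecidableRel G.Adj]

theorem card_filter_adj_le (h : IsConnectorSeq G Q c f g n)
    (hdeg : ∀ v ∉ Q, #{x ∈ Q | G.Adj v x} ≤ m) {X : Finset ℕ} (hX : X ⊆ range n) {v : V}
    (hv : v ∉ Q) : #{i ∈ X | G.Adj v (f i)} ≤ m := by
  classical
  calc #{i ∈ X | G.Adj v (f i)} = #({i ∈ X | G.Adj v (f i)}.image f) :=
        (card_image_of_injOn (h.injOn.mono (coe_subset.mpr ((filter_subset _ X).trans hX)))).symm
    _ ≤ #{x ∈ Q | G.Adj v x} := card_le_card fun x hx => by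
        obtain ⟨i, hi, rfl⟩ := mem_image.mp hx
        obtain ⟨hiX, hvi⟩ := mem_filter.mp hi
        exact mem_filter.mpr ⟨h.mem i (mem_range.mp (hX hiX)), hvi⟩
    _ ≤ m := hdeg v hv

theorem card_le_mul_card_image [DecidableEq V] (h : IsConnectorSeq G Q c f g n)
    (hdeg : ∀ v ∉ Q, #{x ∈ Q | G.Adj v x} ≤ m) {X : Finset ℕ} (hX : X ⊆ range n) :
    #X ≤ m * #(X.image g) := by
  classical
  refine Finset.card_le_mul_card_image X m fun v hv => ?_
  obtain ⟨i, hi, rfl⟩ := mem_image.mp hv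
  calc #{j ∈ X | g j = g i} ≤ #{j ∈ X | G.Adj (g i) (f j)} := card_le_card fun j hj => by
        obtain ⟨hjX, hj⟩ := mem_filter.mp hj
        exact mem_filter.mpr ⟨hjX, hj ▸ h.adj j (mem_range.mp (hX hjX))⟩
    _ ≤ m := h.card_filter_adj_le hdeg hX (h.not_mem i (mem_range.mp (hX hi)))

theorem card_le_of_forall_adj (hP5 : IsFree G (pathGraph 5))
    (hKpe : IsFree G (completeMinusEdge (m + 3))) (hQ : G.IsClique (Q : Set V))
    (hdeg : ∀ v ∉ Q, #{x ∈ Q | G.Adj v x} ≤ m) (h : IsConnectorSeq G Q c f g (n + 1))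
    {X : Finset ℕ} (hX : X ⊆ range n) {x y : V} (hx : ∀ i ∈ X, G.Adj x (g i))
    (hy : ∀ i ∈ X, G.Adj y (g i)) (hxy : ¬G.Adj x y) (hne : x ≠ y) : #X ≤ m * m := by
  classical
  calc #X ≤ m * #(X.image g) :=
        h.card_le_mul_card_image hdeg (hX.trans (range_subset_range.mpr (by omega)))
    _ ≤ m * m := by
      refine Nat.mul_le_mul_left m (not_lt.mp fun hcard => hxy ?_)
      have hsub : (X.image g : Set V) ⊆ g '' Set.Iio n := by
        rw [coe_image]
        exact Set.image_mono fun i hi => by simpa using hX hi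
      refine hKpe.adj_of_isClique (by omega) (K := X.image g)
        ((h.isClique_image hP5 hQ).subset hsub) (by omega) ?_ ?_ hne
      all_goals
        intro z hz
        obtain ⟨i, hi, rfl⟩ := mem_image.mp hz
      exacts [hx i hi, hy i hi]

theorem false_of_not_adj (hP5 : IsFree G (pathGraph 5))
    (hKpe : IsFree G (completeMinusEdge (m + 3))) (hQ : G.IsClique (Q : Set V))
    (hdeg : ∀ v ∉ Q, #{x ∈ Q | G.Adj v x} ≤ m) (hn : 2 * (m * m) + m + 2 ≤ n) {a b : V}
    {h : ℕ → V} (hga : IsConnectorSeq G Q a f g (n + 1))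
    (hhb : IsConnectorSeq G Q b f h (n + 1)) (hab : ¬G.Adj a b) (hne : a ≠ b) : False := by
  have hSb : #{i ∈ range n | G.Adj b (g i)} ≤ m * m :=
    hga.card_le_of_forall_adj hP5 hKpe hQ hdeg (filter_subset _ _)
      (fun i hi => (hga.adj_center i (by simp at hi; omega)).symm)
      (fun i hi => (mem_filter.mp hi).2) hab hne
  obtain ⟨i₀, hi₀, hbg⟩ : ∃ i₀ ∈ Ico (m * m + m + 1) n, ¬G.Adj b (g i₀) := by
    by_contra! hall
    have := card_le_card fun i hi =>
      mem_filter.mpr ⟨mem_range.mpr (mem_Ico.mp hi).2, hall i hi⟩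
    simp only [Nat.card_Ico] at this
    omega
  obtain ⟨hi₀m, hi₀n⟩ := mem_Ico.mp hi₀
  have hJ : i₀ ≤ #{j ∈ range i₀ | ¬G.Adj (g i₀) (f j)} + m := by
    have := card_filter_add_card_filter_not (s := range i₀) (fun j => G.Adj (g i₀) (f j))
    have := hga.card_filter_adj_le hdeg (X := range i₀) (range_subset_range.mpr (by omega))
      (hga.not_mem i₀ (by omega))
    simp only [card_range] at *
    omega
  have hJadj : ∀ j ∈ {j ∈ range i₀ | ¬G.Adj (g i₀) (f j)}, G.Adj (g i₀) (h j) := by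
    intro j hj
    obtain ⟨hj, hgf⟩ := mem_filter.mp hj
    have hji₀ := mem_range.mp hj
    by_contra hna
    -- the induced path `b, h j, f j, f i₀, g i₀`
    exact hP5.false_of_inducedPath (hhb.adj_center j (by omega)).symm (hhb.adj j (by omega))
      (hQ (hga.mem j (by omega)) (hga.mem i₀ (by omega)) (hga.ne j i₀ hji₀ (by omega)))
      (hga.adj i₀ (by omega)).symm (hhb.not_adj_center j (by omega))
      (hhb.not_adj_center i₀ (by omega)) hbg (hhb.not_adj j i₀ hji₀ (by omega))
      (fun h => hna h.symm) (fun h => hgf h.symm)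
  have := hhb.card_le_of_forall_adj hP5 hKpe hQ hdeg
    ((filter_subset _ _).trans (range_subset_range.mpr hi₀n.le)) hJadj
    (fun j hj => (hhb.adj_center j (by simp at hj; omega)).symm) (fun h => hbg h.symm)
    (fun h => hhb.not_adj_center i₀ (by omega) (h ▸ hga.adj i₀ (by omega)))
  omega

end IsConnectorSeq

theorem IsFree.card_le_of_not_adj [DecidableRel G.Adj] (hP5 : IsFree G (pathGraph 5))
    {m : ℕ} (hKpe : IsFree G (completeMinusEdge (m + 3))) (hsep : ¬HasCliqueSeparator G)
    {Q : Finset V} (hQ : G.IsClique (Q : Set V)) (hdeg : ∀ v ∉ Q, #{x ∈ Q | G.Adj v x} ≤ m)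
    {a b : V} (ha : a ∉ Q) (hb : b ∉ Q) (hab : ¬G.Adj a b) (hne : a ≠ b) :
    #Q ≤ (2 * (m * m) + m + 3) * (2 * m + 1) + 2 * m := by
  classical
  by_contra! hbig
  have hcommon : ∀ c ∉ Q, ∀ u ∈ Q, ¬G.Adj c u → ∃ s, s ∉ Q ∧ G.Adj s u ∧ G.Adj s c :=
    fun c hc u hu hcu => by
      simpa using hP5.exists_common_adj hsep hQ hdeg (by nlinarith) hu hc fun h => hcu h.symm
  choose! σ hσ using hcommon a ha
  choose! τ hτ using hcommon b hb
  set Qs := {u ∈ Q | ¬G.Adj a u ∧ ¬G.Adj b u}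
  have hQs : #Q ≤ #Qs + 2 * m := by
    calc #Q ≤ #(Qs ∪ {x ∈ Q | G.Adj a x} ∪ {x ∈ Q | G.Adj b x}) :=
          card_le_card fun u hu => by simp only [Qs, mem_union, mem_filter, hu, true_and]; tauto
      _ ≤ #Qs + 2 * m := by grw [card_union_le, card_union_le, hdeg a ha, hdeg b hb]; omega
  have hB : ∀ u ∈ Qs, #{x ∈ Q | G.Adj (σ u) x ∨ G.Adj (τ u) x} ≤ 2 * m := by
    intro u hu
    obtain ⟨huQ, hau, hbu⟩ := mem_filter.mp hu
    rw [filter_or]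
    grw [card_union_le, hdeg _ (hσ u huQ hau).1, hdeg _ (hτ u huQ hbu).1]
    omega
  have : Nonempty V := ⟨a⟩
  obtain ⟨f, hfQs, hgen⟩ := exists_seq_forall_notMem _ (2 * (m * m) + m + 3) Qs hB (by nlinarith)
  have hf : ∀ i < 2 * (m * m) + m + 3, f i ∈ Q ∧ ¬G.Adj a (f i) ∧ ¬G.Adj b (f i) :=
    fun i hi => mem_filter.mp (hfQs i hi)
  have hlater : ∀ i j, i < j → j < 2 * (m * m) + m + 3 →
      f i ≠ f j ∧ ¬G.Adj (σ (f i)) (f j) ∧ ¬G.Adj (τ (f i)) (f j) := by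
    intro i j hij hj
    have := hgen i j hij hj
    simp only [mem_filter, (hf j hj).1, true_and, not_or] at this
    exact ⟨this.1, this.2⟩
  exact IsConnectorSeq.false_of_not_adj hP5 hKpe hQ hdeg le_rfl
    (.of_comp (fun i hi => ⟨(hf i hi).1, (hf i hi).2.1⟩) hσ
      fun i j hij hj => ⟨(hlater i j hij hj).1, (hlater i j hij hj).2.1⟩)
    (.of_comp (fun i hi => ⟨(hf i hi).1, (hf i hi).2.2⟩) hτ
      fun i j hij hj => ⟨(hlater i j hij hj).1, (hlater i j hij hj).2.2⟩) hab hne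

theorem cubic_bound_le_pow_mul (m : ℕ) :
    (2 * (m * m) + m + 3) * (2 * m + 1) + 2 * m ≤ (m + 3 + 1) ^ (m + 3 + 2) * (m + 3 - 2) := by
  calc (2 * (m * m) + m + 3) * (2 * m + 1) + 2 * m ≤ (m + 4) ^ 5 := by
        ring_nf; nlinarith [Nat.zero_le (m ^ 4), Nat.zero_le (m ^ 5)]
    _ ≤ (m + 4) ^ (m + 5) := Nat.pow_le_pow_right (by omega) (by omega)
    _ ≤ (m + 3 + 1) ^ (m + 3 + 2) * (m + 3 - 2) := Nat.le_mul_of_pos_right _ (by omega)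

end

theorem maxClique_bound_of_P5_Kpe_free_general
    {V : Type*} (G : SimpleGraph V) (p : ℕ) (hp : 3 ≤ p)
    (hP5 : IsFree G (SimpleGraph.pathGraph 5))
    (hKpe : IsFree G (completeMinusEdge p))
    (hnosep : ¬ HasCliqueSeparator G)
    (Q : Finset V) (hQ : G.IsClique (Q : Set V))
    (hQmax : ∀ C : Finset V, G.IsClique (C : Set V) → C.card ≤ Q.card) :
    (¬ ∃ S : Finset V, S.card = 3 ∧ ∀ u ∈ S, ∀ v ∈ S, u ≠ v → ¬ G.Adj u v) ∨
      Q.card ≤ (p + 1) ^ (p + 2) * (p - 2) := by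
  classical
  refine or_iff_not_imp_left.mpr fun hS => ?_
  obtain ⟨S, hS3, hSind⟩ := not_not.mp hS
  obtain ⟨m, rfl⟩ : ∃ m, p = m + 3 := ⟨p - 3, by omega⟩
  have hout : 1 < #(S \ Q) := by
    have := IsIndepSet.card_inter_le_one (S := S) (fun u hu v hv => hSind u hu v hv) hQ
    have := card_sdiff_add_card_inter S Q
    omega
  obtain ⟨a, ha, b, hb, hne⟩ := one_lt_card.mp hout
  rw [mem_sdiff] at ha hb
  calc #Q ≤ (2 * (m * m) + m + 3) * (2 * m + 1) + 2 * m :=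
        hP5.card_le_of_not_adj hKpe hnosep hQ
          (fun v hv => hKpe.card_filter_adj_le (by omega) hQ hQmax hv) ha.2 hb.2
          (hSind a ha.1 b hb.1 hne) hne
    _ ≤ (m + 3 + 1) ^ (m + 3 + 2) * (m + 3 - 2) := cubic_bound_le_pow_mul m

/-- Let `p ≥ 3` and let `G` be a connected `{P₅, Kₚ − e}`-free graph
without clique separators, with maximum clique `Q`. Then `G` has no independent set of
three vertices, or `|Q| ≤ (p+1)^(p+2) * (p−2)`. -/
theorem maxClique_bound_of_P5_Kpe_free
    {V : Type*} [Fintype V] (G : SimpleGraph V) (p : ℕ) (hp : 3 ≤ p)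
    (hconn : G.Connected)
    (hP5 : IsFree G (SimpleGraph.pathGraph 5))
    (hKpe : IsFree G (completeMinusEdge p))
    (hnosep : ¬ HasCliqueSeparator G)
    (Q : Finset V) (hQ : G.IsClique (Q : Set V))
    (hQmax : ∀ C : Finset V, G.IsClique (C : Set V) → C.card ≤ Q.card) :
    (¬ ∃ S : Finset V, S.card = 3 ∧ ∀ u ∈ S, ∀ v ∈ S, u ≠ v → ¬ G.Adj u v) ∨
      Q.card ≤ (p + 1) ^ (p + 2) * (p - 2) :=
  maxClique_bound_of_P5_Kpe_free_general G p hp hP5 hKpe hnosep Q hQ hQmax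
end

section
/- Let G be a finite simple graph containing no induced subgraph isomorphic to P5 (the path on 5 vertices). Let k ≥ 4, let u_1, …, u_k be distinct pairwise adjacent vertices of G, and let v_1, …, v_k be vertices with v_i ∉ {u_1, …, u_k} such that for each i, v_i is adjacent to u_i and nonadjacent to u_j for every j ≠ i. Then the set {v_1, …, v_k} is either a clique (pairwise adjacent) or an independent set (pairwise nonadjacent) in G. -/
private lemma mkP5 {V : Type*} (G : SimpleGraph V) (x : Fin 5 → V)
    (hinj : Function.Injective x)
    (hadj : ∀ i j, G.Adj (x i) (x j) ↔ (SimpleGraph.pathGraph 5).Adj i j) :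
    Nonempty (SimpleGraph.pathGraph 5 ↪g G) :=
  ⟨⟨⟨x, hinj⟩, fun {i j} => hadj i j⟩⟩

private lemma buildP5 {V : Type*} (G : SimpleGraph V) (a b c d e : V)
    (hab : G.Adj a b) (hbc : G.Adj b c) (hcd : G.Adj c d) (hde : G.Adj d e)
    (hac : ¬G.Adj a c) (had : ¬G.Adj a d) (hae : ¬G.Adj a e)
    (hbd : ¬G.Adj b d) (hbe : ¬G.Adj b e) (hce : ¬G.Adj c e)
    (nac : a ≠ c) (nad : a ≠ d) (nae : a ≠ e) (nbd : b ≠ d) (nbe : b ≠ e)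
    (nce : c ≠ e) : Nonempty (SimpleGraph.pathGraph 5 ↪g G) := by
  have nab := hab.ne; have nbc := hbc.ne; have ncd := hcd.ne; have nde := hde.ne
  have hba := hab.symm; have hcb := hbc.symm; have hdc := hcd.symm; have hed := hde.symm
  have hca : ¬G.Adj c a := fun h => hac h.symm
  have hda : ¬G.Adj d a := fun h => had h.symm
  have hea : ¬G.Adj e a := fun h => hae h.symm
  have hdb : ¬G.Adj d b := fun h => hbd h.symm
  have heb : ¬G.Adj e b := fun h => hbe h.symm
  have hec : ¬G.Adj e c := fun h => hce h.symm
  apply mkP5 G ![a, b, c, d, e]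
  · intro i j hij
    fin_cases i <;> fin_cases j <;> simp_all
  · intro i j
    fin_cases i <;> fin_cases j <;>
      simp_all [SimpleGraph.pathGraph_adj] <;> decide

/-- Let `G` be `P₅`-free, let `k ≥ 4`, let `u 1, …, u k` be distinct
pairwise adjacent vertices and `v 1, …, v k` vertices outside `{u 1, …, u k}` such that
each `v i` is adjacent to `u i` and to no other `u j`. Then `{v 1, …, v k}` is a clique
or an independent set. -/
theorem private_neighbors_clique_or_indep
    {V : Type*} [Fintype V] (G : SimpleGraph V)
    (hP5 : IsFree G (SimpleGraph.pathGraph 5))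
    (k : ℕ) (hk : 4 ≤ k)
    (u v : Fin k → V)
    (huinj : Function.Injective u)
    (huclique : ∀ i j : Fin k, i ≠ j → G.Adj (u i) (u j))
    (hvout : ∀ i : Fin k, v i ∉ Set.range u)
    (hvadj : ∀ i : Fin k, G.Adj (v i) (u i))
    (hvnadj : ∀ i j : Fin k, i ≠ j → ¬ G.Adj (v i) (u j)) :
    G.IsClique (Set.range v) ∨
      (Set.range v).Pairwise (fun a b => ¬ G.Adj a b) := by
  -- v is injective
  have hvinj : Function.Injective v := by
    intro i j hij
    by_contra hne
    exact hvnadj j i (Ne.symm hne) (hij ▸ hvadj i)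
  have hvu : ∀ i j : Fin k, v i ≠ u j := by
    intro i j h
    exact hvout i ⟨j, h.symm⟩
  -- Lemma L: no edge v_a v_b with v_c nonadjacent to both
  have L : ∀ a b c : Fin k, a ≠ b → c ≠ a → c ≠ b →
      G.Adj (v a) (v b) → ¬G.Adj (v c) (v a) → ¬G.Adj (v c) (v b) → False := by
    intro a b c hab hca hcb hadj hna hnb
    refine hP5 (buildP5 G (v c) (u c) (u a) (v a) (v b) ?_ ?_ ?_ ?_ ?_ ?_ ?_ ?_ ?_ ?_
      ?_ ?_ ?_ ?_ ?_ ?_)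
    · exact hvadj c
    · exact (huclique a c (Ne.symm hca)).symm
    · exact (hvadj a).symm
    · exact hadj
    · exact hvnadj c a hca
    · exact hna
    · exact hnb
    · exact fun h => hvnadj a c hca.symm h.symm
    · exact fun h => hvnadj b c hcb.symm h.symm
    · exact fun h => hvnadj b a hab.symm h.symm
    · exact hvu c a
    · exact fun h => hca (hvinj h)
    · exact fun h => (hcb (hvinj h)).elim
    · exact fun h => hvu a c h.symm
    · exact fun h => hvu b c h.symm
    · exact fun h => hvu b a h.symm
  -- Lemma M: no vertex v_a adjacent to two nonadjacent v_c, v_d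
  have M : ∀ a c d : Fin k, a ≠ c → a ≠ d → c ≠ d →
      G.Adj (v a) (v c) → G.Adj (v a) (v d) → ¬G.Adj (v c) (v d) → False := by
    intro a c d hac had hcd h1 h2 h3
    obtain ⟨e, hea, hec, hed⟩ : ∃ e : Fin k, e ≠ a ∧ e ≠ c ∧ e ≠ d := by
      by_contra h
      push_neg at h
      have hsub : (Finset.univ : Finset (Fin k)) ⊆ {a, c, d} := by
        intro x _
        by_cases h1 : x = a
        · simp [h1]
        by_cases h2 : x = c
        · simp [h2]
        simp [h x h1 h2]
      have h1 := Finset.card_le_card hsub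
      have h2 : ({a, c, d} : Finset (Fin k)).card ≤ 3 := by
        refine le_trans (Finset.card_insert_le _ _) ?_
        refine Nat.succ_le_succ (le_trans (Finset.card_insert_le _ _) ?_)
        simp
      simp only [Finset.card_univ, Fintype.card_fin] at h1
      omega
    refine hP5 (buildP5 G (v c) (v a) (v d) (u d) (u e) ?_ ?_ ?_ ?_ ?_ ?_ ?_ ?_ ?_ ?_
      ?_ ?_ ?_ ?_ ?_ ?_)
    · exact h1.symm
    · exact h2
    · exact hvadj d
    · exact huclique d e (fun h => hed h.symm)
    · exact h3
    · exact hvnadj c d hcd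
    · exact hvnadj c e (Ne.symm hec)
    · exact hvnadj a d had
    · exact hvnadj a e (Ne.symm hea)
    · exact hvnadj d e (Ne.symm hed)
    · exact fun h => hcd (hvinj h)
    · exact hvu c d
    · exact hvu c e
    · exact hvu a d
    · exact hvu a e
    · exact hvu d e
  by_contra hcon
  push_neg at hcon
  obtain ⟨hnc, hnp⟩ := hcon
  rw [SimpleGraph.isClique_iff] at hnc
  rw [Set.Pairwise] at hnc hnp
  push_neg at hnc hnp
  obtain ⟨x, ⟨a, rfl⟩, y, ⟨b, rfl⟩, hxy, hnadj⟩ := hnc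
  obtain ⟨z, ⟨c, rfl⟩, w, ⟨d, rfl⟩, hzw, hadj⟩ := hnp
  -- indices: a b nonadjacent (a≠b), c d adjacent
  have hab : a ≠ b := fun h => hxy (h ▸ rfl)
  have hcd : c ≠ d := fun h => hzw (h ▸ rfl)
  have hnba : ¬G.Adj (v b) (v a) := fun h => hnadj h.symm
  -- now case analysis
  by_cases hac : a = c
  · subst hac
    by_cases hbd : b = d
    · exact hnadj (hbd ▸ hadj)
    · by_cases h' : G.Adj (v b) (v d)
      · exact M d a b (Ne.symm hcd) (fun h => hbd h.symm) hab hadj.symm h'.symm hnadj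
      · exact L a d b hcd (Ne.symm hab) hbd hadj hnba h'
  · by_cases hbc : b = c
    · subst hbc
      by_cases had : a = d
      · exact hnadj (by rw [had]; exact hadj.symm)
      · by_cases h' : G.Adj (v a) (v d)
        · exact M d a b (fun h => had h.symm) (Ne.symm hcd) hab h'.symm hadj.symm hnadj
        · exact L b d a hcd hab had hadj hnadj h'
    · by_cases hbd : b = d
      · subst hbd
        by_cases h' : G.Adj (v a) (v c)
        · exact M c a b (Ne.symm hac) hcd hab h'.symm hadj hnadj
        · exact L c b a hcd hac hab hadj h' hnadj
      · by_cases had : a = d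
        · subst had
          by_cases h' : G.Adj (v b) (v c)
          · exact M c a b hcd (Ne.symm hbc) hab hadj h'.symm hnadj
          · exact L c a b hcd hbc (Ne.symm hab) hadj h' hnba
        · by_cases hA : G.Adj (v a) (v c)
          · by_cases hB : G.Adj (v b) (v c)
            · exact M c a b (Ne.symm hac) (Ne.symm hbc) hab hA.symm hB.symm hnadj
            · exact L a c b hac (Ne.symm hab) hbc hA hnba hB
          · by_cases hB : G.Adj (v a) (v d)
            · by_cases hC : G.Adj (v b) (v d)
              · exact M d a b (Ne.symm had) (Ne.symm hbd) hab hB.symm hC.symm hnadj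
              · exact L a d b had (Ne.symm hab) hbd hB hnba hC
            · exact L c d a hcd hac had hadj hA hB
end

section
/- Let G be a finite simple graph with n vertices that contains no independent set of three vertices (equivalently, G is O3-free, where O3 is the empty graph on 3 vertices). Then the chromatic number of G equals n minus the maximum size of a matching in the complement of G: χ(G) = n − ν(Ḡ), where ν(Ḡ) denotes the number of edges in a maximum matching of the complement graph Ḡ. -/
/-!
The colour classes of size two of a colouring in which every class has at most two vertices
form a matching `M` of `Gᶜ`, and such a colouring uses exactly `n - |M|` colours. Conversely,
contracting the edges of any matching `M` of `Gᶜ` gives a colouring of `G` with `n - |M|`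
colours, so `χ(G) ≤ n - ν(Gᶜ)`. When `G` has no independent set of size three every colour class
has at most two vertices, which gives `χ(G) ≥ n - ν(Gᶜ)`.
-/

open Function

namespace SimpleGraph.Subgraph.IsMatching

variable {V : Type*} {H : SimpleGraph V} {M : H.Subgraph} {u v : V}

open Classical in
/-- The partition of `V` into the edges of `M` and the unmatched vertices. -/
noncomputable def toBlock (hM : M.IsMatching) (v : V) : M.edgeSet ⊕ ↥M.vertsᶜ :=
  if hv : v ∈ M.verts then .inl (hM.toEdge ⟨v, hv⟩) else .inr ⟨v, hv⟩

lemma toBlock_surjective (hM : M.IsMatching) : Surjective hM.toBlock := by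
  rintro (e | ⟨v, hv⟩)
  · obtain ⟨⟨v, hv⟩, rfl⟩ := toEdge.surjective hM e
    exact ⟨v, dif_pos hv⟩
  · exact ⟨v, dif_neg hv⟩

lemma toBlock_eq_of_adj (hM : M.IsMatching) (huv : M.Adj u v) :
    hM.toBlock u = hM.toBlock v := by
  simp only [toBlock, dif_pos huv.fst_mem, dif_pos huv.snd_mem, hM.toEdge_eq_toEdge_of_adj huv]

lemma eq_or_adj_of_toBlock_eq (hM : M.IsMatching) (h : hM.toBlock u = hM.toBlock v) :
    u = v ∨ M.Adj u v := by
  by_cases hu : u ∈ M.verts <;> by_cases hv : v ∈ M.verts <;>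
    simp only [toBlock, hu, hv, dif_pos, dif_neg, not_false_eq_true, reduceCtorEq,
      Sum.inl.injEq, Sum.inr.injEq, Subtype.mk.injEq] at h
  · obtain ⟨w, huw, -⟩ := hM hu
    have hvw : ⟨v, hv⟩ ∈ hM.toEdge ⁻¹' {⟨s(u, w), huw⟩} := by
      rw [Set.mem_preimage, ← h, hM.toEdge_eq_of_adj huw]; rfl
    rw [hM.toEdge_preimage_singleton huw] at hvw
    rcases hvw with h | h <;> cases congrArg Subtype.val h
    exacts [.inl rfl, .inr huw]
  · exact .inl h

lemma card_toEdge_fiber (hM : M.IsMatching) (e : M.edgeSet) :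
    Nat.card {v // hM.toEdge v = e} = 2 := by
  obtain ⟨⟨u, w⟩, huw⟩ := e
  change Nat.card (hM.toEdge ⁻¹' {⟨s(u, w), huw⟩}) = 2
  rw [hM.toEdge_preimage_singleton huw, Nat.card_coe_set_eq, Set.ncard_pair]
  simpa using huw.ne

lemma card_verts [Finite V] (hM : M.IsMatching) : Nat.card M.verts = 2 * M.edgeSet.ncard := by
  have := Fintype.ofFinite M.edgeSet
  rw [← Nat.card_congr (Equiv.sigmaFiberEquiv hM.toEdge), Nat.card_sigma]
  simp [hM.card_toEdge_fiber, mul_comm]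

lemma card_blocks [Finite V] (hM : M.IsMatching) :
    Nat.card (M.edgeSet ⊕ ↥M.vertsᶜ) = Nat.card V - M.edgeSet.ncard := by
  have hV := Set.ncard_add_ncard_compl M.verts
  rw [← Nat.card_coe_set_eq, hM.card_verts] at hV
  rw [Nat.card_sum, Nat.card_coe_set_eq, Nat.card_coe_set_eq]
  omega

lemma card_sub_ncard_edgeSet_le [Finite V] {β : Type*} [Finite β] (hM : M.IsMatching)
    {g : V → β} (hg : ∀ u v, g u = g v → u = v ∨ M.Adj u v) :
    Nat.card V - M.edgeSet.ncard ≤ Nat.card β := by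
  rw [← hM.card_blocks]
  refine Nat.card_le_card_of_injective (g ∘ surjInv hM.toBlock_surjective) fun a b hab ↦ ?_
  rw [← surjInv_eq hM.toBlock_surjective a, ← surjInv_eq hM.toBlock_surjective b]
  rcases hg _ _ hab with h | h
  · rw [h]
  · exact hM.toBlock_eq_of_adj h

end SimpleGraph.Subgraph.IsMatching

namespace SimpleGraph

variable {V α : Type*} {G : SimpleGraph V}

noncomputable def matchingNumber (H : SimpleGraph V) : ℕ :=
  sSup {m : ℕ | ∃ M : H.Subgraph, M.IsMatching ∧ M.edgeSet.ncard = m}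

lemma bddAbove_ncard_edgeSet_isMatching [Finite V] (H : SimpleGraph V) :
    BddAbove {m : ℕ | ∃ M : H.Subgraph, M.IsMatching ∧ M.edgeSet.ncard = m} :=
  ⟨Nat.card (Sym2 V), by rintro _ ⟨M, -, rfl⟩; exact Set.ncard_le_card _⟩

lemma exists_isMatching_ncard_edgeSet_eq_matchingNumber [Finite V] (H : SimpleGraph V) :
    ∃ M : H.Subgraph, M.IsMatching ∧ M.edgeSet.ncard = H.matchingNumber :=
  Nat.sSup_mem ⟨0, show ∃ M : H.Subgraph, _ from ⟨⊥, fun _ hv ↦ hv.elim, by simp⟩⟩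
    H.bddAbove_ncard_edgeSet_isMatching

lemma Subgraph.IsMatching.ncard_edgeSet_le_matchingNumber [Finite V] {H : SimpleGraph V}
    {M : H.Subgraph} (hM : M.IsMatching) : M.edgeSet.ncard ≤ H.matchingNumber :=
  le_csSup H.bddAbove_ncard_edgeSet_isMatching ⟨M, hM, rfl⟩

lemma colorable_of_isMatching_compl [Finite V] {M : Gᶜ.Subgraph} (hM : M.IsMatching) :
    G.Colorable (Nat.card V - M.edgeSet.ncard) := by
  have := Fintype.ofFinite (M.edgeSet ⊕ ↥M.vertsᶜ)
  rw [← hM.card_blocks, Nat.card_eq_fintype_card]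
  refine (Coloring.mk hM.toBlock fun huv h ↦ ?_).colorable
  rcases hM.eq_or_adj_of_toBlock_eq h with rfl | h
  · exact huv.ne rfl
  · exact (M.adj_sub h).2 huv

def Coloring.sameColorSubgraph (C : G.Coloring α) : Gᶜ.Subgraph where
  verts := {v | ∃ w, v ≠ w ∧ C v = C w}
  Adj u v := u ≠ v ∧ C u = C v
  adj_sub h := ⟨h.1, fun huv ↦ C.valid huv h.2⟩
  edge_vert h := ⟨_, h⟩
  symm := ⟨fun _ _ h ↦ ⟨h.1.symm, h.2.symm⟩⟩

lemma Coloring.isMatching_sameColorSubgraph (hG : G.IndepSetFree 3) (C : G.Coloring α) :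
    C.sameColorSubgraph.IsMatching := by
  classical
  intro v hv
  obtain ⟨w, hvw, hc⟩ : ∃ w, v ≠ w ∧ C v = C w := hv
  refine ⟨w, ⟨hvw, hc⟩, fun y ⟨hvy, hcy⟩ ↦ ?_⟩
  by_contra hyw
  refine hG ({v, y, w} : Finset V) ?_
  rw [← isNClique_compl, is3Clique_triple_iff]
  exact ⟨C.sameColorSubgraph.adj_sub ⟨hvy, hcy⟩, C.sameColorSubgraph.adj_sub ⟨hvw, hc⟩,
    C.sameColorSubgraph.adj_sub ⟨hyw, hcy.symm.trans hc⟩⟩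

end SimpleGraph

/-- If a finite graph `G` on `n` vertices has no independent set of
three vertices (it is `O₃`-free), then `χ(G) = n − ν(Gᶜ)`, where `ν(Gᶜ)` is the maximum
number of edges in a matching of the complement of `G`. -/
theorem chromaticNumber_of_O3_free
    {V : Type*} [Fintype V] (G : SimpleGraph V)
    (hO3 : ¬ ∃ S : Finset V, S.card = 3 ∧ ∀ u ∈ S, ∀ v ∈ S, u ≠ v → ¬ G.Adj u v) :
    G.chromaticNumber =
      ((Fintype.card V -
        sSup {m : ℕ | ∃ M : SimpleGraph.Subgraph Gᶜ, M.IsMatching ∧ M.edgeSet.ncard = m}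
        : ℕ) : ℕ∞) := by
  have hG : G.IndepSetFree 3 := fun s hs ↦
    hO3 ⟨s, hs.card_eq, fun u hu v hv huv ↦ hs.isIndepSet hu hv huv⟩
  change G.chromaticNumber = (Fintype.card V - Gᶜ.matchingNumber : ℕ)
  rw [← Nat.card_eq_fintype_card]
  refine le_antisymm ?_ (SimpleGraph.le_chromaticNumber_iff_coloring.2 fun m C ↦ ?_)
  · obtain ⟨M, hM, hν⟩ := Gᶜ.exists_isMatching_ncard_edgeSet_eq_matchingNumber
    exact (hν ▸ SimpleGraph.colorable_of_isMatching_compl hM).chromaticNumber_le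
  · have hM := C.isMatching_sameColorSubgraph hG
    calc Nat.card V - Gᶜ.matchingNumber
        ≤ Nat.card V - C.sameColorSubgraph.edgeSet.ncard :=
          Nat.sub_le_sub_left hM.ncard_edgeSet_le_matchingNumber _
      _ ≤ Nat.card (Fin m) :=
          hM.card_sub_ncard_edgeSet_le fun _ _ h ↦ or_iff_not_imp_left.2 fun hne ↦ ⟨hne, h⟩
      _ = m := Nat.card_fin m
end
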